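/- arXiv:1407.2886 — 7 statements merged into one kernel-verified Lean document; each statement's English description precedes it below -/
import Mathlib

section
/- If all eight random variables A_ij, B_ij (i,j ∈ {1,2}) taking values in {−1,+1} are jointly distributed on a single probability space, then for each choice of (i,j), |⟨A₁₁B₁₁⟩ + ⟨A₁₂B₁₂⟩ + ⟨A₂₁B₂₁⟩ + ⟨A₂₂B₂₂⟩ − 2⟨A_ij B_ij⟩| ≤ 2 + 2Δ, where Δ = Pr[A₁₁≠A₁₂] + Pr[A₂₁≠A₂₂] + Pr[B₁₁≠B₂₁] + Pr[B₁₂≠B₂₂]. -/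
open MeasureTheory

set_option maxHeartbeats 8000000 in
lemma chsh_key (a00 a01 a10 a11 b00 b01 b10 b11 t : ℝ)
    (h1 : a00 = 1 ∨ a00 = -1) (h2 : a01 = 1 ∨ a01 = -1)
    (h3 : a10 = 1 ∨ a10 = -1) (h4 : a11 = 1 ∨ a11 = -1)
    (h5 : b00 = 1 ∨ b00 = -1) (h6 : b01 = 1 ∨ b01 = -1)
    (h7 : b10 = 1 ∨ b10 = -1) (h8 : b11 = 1 ∨ b11 = -1)
    (ht : t = a00 * b00 ∨ t = a01 * b01 ∨ t = a10 * b10 ∨ t = a11 * b11) :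
    |a00 * b00 + a01 * b01 + a10 * b10 + a11 * b11 - 2 * t| ≤
      2 + (|a00 - a01| + |a10 - a11| + |b00 - b10| + |b01 - b11|) := by
  rcases h1 with rfl|rfl <;> rcases h2 with rfl|rfl <;> rcases h3 with rfl|rfl <;>
    rcases h4 with rfl|rfl <;> rcases h5 with rfl|rfl <;> rcases h6 with rfl|rfl <;>
    rcases h7 with rfl|rfl <;> rcases h8 with rfl|rfl <;>
    rcases ht with rfl|rfl|rfl|rfl <;> norm_num

lemma chsh_diff_eq_indicator {Ω : Type*} (X Y : Ω → ℝ)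
    (hX : ∀ ω, X ω = 1 ∨ X ω = -1) (hY : ∀ ω, Y ω = 1 ∨ Y ω = -1) (ω : Ω) :
    |X ω - Y ω| = ({ω | X ω ≠ Y ω}).indicator (fun _ => (2:ℝ)) ω := by
  by_cases h : X ω = Y ω
  · simp [Set.indicator_apply, h]
  · have hm : ω ∈ {ω | X ω ≠ Y ω} := h
    rw [Set.indicator_of_mem hm]
    rcases hX ω with h1|h1 <;> rcases hY ω with h2|h2 <;> rw [h1, h2] <;>
      first | (exact absurd (h1.trans h2.symm) h) | norm_num

/-- If all eight ±1-valued random variables `A i j`, `B i j`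
(`i, j ∈ {1,2}`, here `Fin 2`, first index = Alice's setting, second = Bob's setting)
are jointly distributed, then for each `(i,j)`,
`|⟨A₁₁B₁₁⟩ + ⟨A₁₂B₁₂⟩ + ⟨A₂₁B₂₁⟩ + ⟨A₂₂B₂₂⟩ − 2⟨A_ij B_ij⟩| ≤ 2 + 2Δ`, where
`Δ = Pr[A₁₁≠A₁₂] + Pr[A₂₁≠A₂₂] + Pr[B₁₁≠B₂₁] + Pr[B₁₂≠B₂₂]`. -/
theorem chsh_with_signaling {Ω : Type*} [MeasurableSpace Ω]
    (μ : Measure Ω) [IsProbabilityMeasure μ]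
    (A B : Fin 2 → Fin 2 → Ω → ℝ)
    (hmA : ∀ i j, Measurable (A i j)) (hmB : ∀ i j, Measurable (B i j))
    (hA : ∀ i j ω, A i j ω = 1 ∨ A i j ω = -1)
    (hB : ∀ i j ω, B i j ω = 1 ∨ B i j ω = -1) :
    ∀ i j : Fin 2,
      |(∫ ω, A 0 0 ω * B 0 0 ω ∂μ) + (∫ ω, A 0 1 ω * B 0 1 ω ∂μ) +
        (∫ ω, A 1 0 ω * B 1 0 ω ∂μ) + (∫ ω, A 1 1 ω * B 1 1 ω ∂μ) -
        2 * ∫ ω, A i j ω * B i j ω ∂μ| ≤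
      2 + 2 * ((μ {ω | A 0 0 ω ≠ A 0 1 ω}).toReal + (μ {ω | A 1 0 ω ≠ A 1 1 ω}).toReal +
        (μ {ω | B 0 0 ω ≠ B 1 0 ω}).toReal + (μ {ω | B 0 1 ω ≠ B 1 1 ω}).toReal) := by
  intro i j
  have hint : ∀ i j : Fin 2, Integrable (fun ω => A i j ω * B i j ω) μ := by
    intro i j
    refine ⟨((hmA i j).mul (hmB i j)).aestronglyMeasurable, ?_⟩
    apply HasFiniteIntegral.of_bounded (C := 1)
    filter_upwards with ω
    rcases hA i j ω with h1|h1 <;> rcases hB i j ω with h2|h2 <;> simp [h1, h2]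
  have hJ2 : Integrable (fun ω => A 0 0 ω * B 0 0 ω + A 0 1 ω * B 0 1 ω) μ :=
    (hint 0 0).add (hint 0 1)
  have hJ3 : Integrable (fun ω => A 0 0 ω * B 0 0 ω + A 0 1 ω * B 0 1 ω +
      A 1 0 ω * B 1 0 ω) μ := hJ2.add (hint 1 0)
  have hJ4 : Integrable (fun ω => A 0 0 ω * B 0 0 ω + A 0 1 ω * B 0 1 ω +
      A 1 0 ω * B 1 0 ω + A 1 1 ω * B 1 1 ω) μ := hJ3.add (hint 1 1)
  have hJt : Integrable (fun ω => 2 * (A i j ω * B i j ω)) μ := (hint i j).const_mul 2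
  set f : Ω → ℝ := fun ω => A 0 0 ω * B 0 0 ω + A 0 1 ω * B 0 1 ω +
      A 1 0 ω * B 1 0 ω + A 1 1 ω * B 1 1 ω - 2 * (A i j ω * B i j ω) with hf
  have hintf : Integrable f μ := hJ4.sub hJt
  have heq : ∫ ω, f ω ∂μ = (∫ ω, A 0 0 ω * B 0 0 ω ∂μ) + (∫ ω, A 0 1 ω * B 0 1 ω ∂μ) +
      (∫ ω, A 1 0 ω * B 1 0 ω ∂μ) + (∫ ω, A 1 1 ω * B 1 1 ω ∂μ) -
      2 * ∫ ω, A i j ω * B i j ω ∂μ := by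
    show ∫ ω, (A 0 0 ω * B 0 0 ω + A 0 1 ω * B 0 1 ω + A 1 0 ω * B 1 0 ω +
        A 1 1 ω * B 1 1 ω) - 2 * (A i j ω * B i j ω) ∂μ = _
    rw [integral_sub hJ4 hJt, integral_add hJ3 (hint 1 1), integral_add hJ2 (hint 1 0),
      integral_add (hint 0 0) (hint 0 1), integral_const_mul]
  have hs1 : MeasurableSet {ω | A 0 0 ω ≠ A 0 1 ω} :=
    (measurableSet_eq_fun (hmA 0 0) (hmA 0 1)).compl
  have hs2 : MeasurableSet {ω | A 1 0 ω ≠ A 1 1 ω} :=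
    (measurableSet_eq_fun (hmA 1 0) (hmA 1 1)).compl
  have hs3 : MeasurableSet {ω | B 0 0 ω ≠ B 1 0 ω} :=
    (measurableSet_eq_fun (hmB 0 0) (hmB 1 0)).compl
  have hs4 : MeasurableSet {ω | B 0 1 ω ≠ B 1 1 ω} :=
    (measurableSet_eq_fun (hmB 0 1) (hmB 1 1)).compl
  have hi1 : Integrable ({ω | A 0 0 ω ≠ A 0 1 ω}.indicator (fun _ => (2:ℝ))) μ :=
    (integrable_const (2:ℝ)).indicator hs1
  have hi2 : Integrable ({ω | A 1 0 ω ≠ A 1 1 ω}.indicator (fun _ => (2:ℝ))) μ :=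
    (integrable_const (2:ℝ)).indicator hs2
  have hi3 : Integrable ({ω | B 0 0 ω ≠ B 1 0 ω}.indicator (fun _ => (2:ℝ))) μ :=
    (integrable_const (2:ℝ)).indicator hs3
  have hi4 : Integrable ({ω | B 0 1 ω ≠ B 1 1 ω}.indicator (fun _ => (2:ℝ))) μ :=
    (integrable_const (2:ℝ)).indicator hs4
  have hk2 : Integrable (fun ω => {ω | A 0 0 ω ≠ A 0 1 ω}.indicator (fun _ => (2:ℝ)) ω +
      {ω | A 1 0 ω ≠ A 1 1 ω}.indicator (fun _ => (2:ℝ)) ω) μ := hi1.add hi2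
  have hk3 : Integrable (fun ω => {ω | A 0 0 ω ≠ A 0 1 ω}.indicator (fun _ => (2:ℝ)) ω +
      {ω | A 1 0 ω ≠ A 1 1 ω}.indicator (fun _ => (2:ℝ)) ω +
      {ω | B 0 0 ω ≠ B 1 0 ω}.indicator (fun _ => (2:ℝ)) ω) μ := hk2.add hi3
  have hk4 : Integrable (fun ω => {ω | A 0 0 ω ≠ A 0 1 ω}.indicator (fun _ => (2:ℝ)) ω +
      {ω | A 1 0 ω ≠ A 1 1 ω}.indicator (fun _ => (2:ℝ)) ω +
      {ω | B 0 0 ω ≠ B 1 0 ω}.indicator (fun _ => (2:ℝ)) ω +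
      {ω | B 0 1 ω ≠ B 1 1 ω}.indicator (fun _ => (2:ℝ)) ω) μ := hk3.add hi4
  set g : Ω → ℝ := fun ω => 2 + ({ω | A 0 0 ω ≠ A 0 1 ω}.indicator (fun _ => (2:ℝ)) ω +
      {ω | A 1 0 ω ≠ A 1 1 ω}.indicator (fun _ => (2:ℝ)) ω +
      {ω | B 0 0 ω ≠ B 1 0 ω}.indicator (fun _ => (2:ℝ)) ω +
      {ω | B 0 1 ω ≠ B 1 1 ω}.indicator (fun _ => (2:ℝ)) ω) with hg
  have hintg : Integrable g μ := (integrable_const (2:ℝ)).add hk4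
  have hptwise : ∀ ω, |f ω| ≤ g ω := by
    intro ω
    have key := chsh_key (A 0 0 ω) (A 0 1 ω) (A 1 0 ω) (A 1 1 ω)
      (B 0 0 ω) (B 0 1 ω) (B 1 0 ω) (B 1 1 ω) (A i j ω * B i j ω)
      (hA 0 0 ω) (hA 0 1 ω) (hA 1 0 ω) (hA 1 1 ω)
      (hB 0 0 ω) (hB 0 1 ω) (hB 1 0 ω) (hB 1 1 ω)
      (by fin_cases i <;> fin_cases j <;> simp)
    rw [chsh_diff_eq_indicator (A 0 0) (A 0 1) (hA 0 0) (hA 0 1) ω,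
      chsh_diff_eq_indicator (A 1 0) (A 1 1) (hA 1 0) (hA 1 1) ω,
      chsh_diff_eq_indicator (B 0 0) (B 1 0) (hB 0 0) (hB 1 0) ω,
      chsh_diff_eq_indicator (B 0 1) (B 1 1) (hB 0 1) (hB 1 1) ω] at key
    calc |f ω| ≤ 2 + ({ω | A 0 0 ω ≠ A 0 1 ω}.indicator (fun _ => (2:ℝ)) ω +
        {ω | A 1 0 ω ≠ A 1 1 ω}.indicator (fun _ => (2:ℝ)) ω +
        {ω | B 0 0 ω ≠ B 1 0 ω}.indicator (fun _ => (2:ℝ)) ω +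
        {ω | B 0 1 ω ≠ B 1 1 ω}.indicator (fun _ => (2:ℝ)) ω) := by
          rw [hf]; exact key
      _ = g ω := by rw [hg]
  have hgint : ∫ ω, g ω ∂μ = 2 + 2 * ((μ {ω | A 0 0 ω ≠ A 0 1 ω}).toReal +
      (μ {ω | A 1 0 ω ≠ A 1 1 ω}).toReal + (μ {ω | B 0 0 ω ≠ B 1 0 ω}).toReal +
      (μ {ω | B 0 1 ω ≠ B 1 1 ω}).toReal) := by
    show ∫ ω, (2:ℝ) + ({ω | A 0 0 ω ≠ A 0 1 ω}.indicator (fun _ => (2:ℝ)) ω +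
        {ω | A 1 0 ω ≠ A 1 1 ω}.indicator (fun _ => (2:ℝ)) ω +
        {ω | B 0 0 ω ≠ B 1 0 ω}.indicator (fun _ => (2:ℝ)) ω +
        {ω | B 0 1 ω ≠ B 1 1 ω}.indicator (fun _ => (2:ℝ)) ω) ∂μ = _
    rw [integral_add (integrable_const 2) hk4, integral_add hk3 hi4, integral_add hk2 hi3,
      integral_add hi1 hi2, integral_indicator_const _ hs1, integral_indicator_const _ hs2,
      integral_indicator_const _ hs3, integral_indicator_const _ hs4]
    simp [smul_eq_mul, Measure.real]
    ring
  calc |(∫ ω, A 0 0 ω * B 0 0 ω ∂μ) + (∫ ω, A 0 1 ω * B 0 1 ω ∂μ) +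
        (∫ ω, A 1 0 ω * B 1 0 ω ∂μ) + (∫ ω, A 1 1 ω * B 1 1 ω ∂μ) -
        2 * ∫ ω, A i j ω * B i j ω ∂μ| = |∫ ω, f ω ∂μ| := by rw [heq]
    _ ≤ ∫ ω, |f ω| ∂μ := by simpa [Real.norm_eq_abs] using norm_integral_le_integral_norm f (μ := μ)
    _ ≤ ∫ ω, g ω ∂μ := integral_mono hintf.abs hintg hptwise
    _ = _ := hgint
end

section
/- For any six jointly distributed ±1-valued random variables Q₁₂, Q₂₁, Q₁₃, Q₃₁, Q₂₃, Q₃₂ on a single probability space, any odd-sign combination ±⟨Q₁₂Q₂₁⟩ ± ⟨Q₁₃Q₃₁⟩ ± ⟨Q₂₃Q₃₂⟩ with an odd number of minus signs is at most 1 + 2Δ', where Δ' = Pr[Q₁₂≠Q₁₃] + Pr[Q₂₁≠Q₂₃] + Pr[Q₃₁≠Q₃₂]. -/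
open MeasureTheory

lemma ptwise_lg (s₁ s₂ s₃ a b c d e f : ℝ)
    (hs₁ : s₁ = 1 ∨ s₁ = -1) (hs₂ : s₂ = 1 ∨ s₂ = -1) (hs₃ : s₃ = 1 ∨ s₃ = -1)
    (ha : a = 1 ∨ a = -1) (hb : b = 1 ∨ b = -1) (hc : c = 1 ∨ c = -1)
    (hd : d = 1 ∨ d = -1) (he : e = 1 ∨ e = -1) (hf : f = 1 ∨ f = -1)
    (hodd : s₁ * s₂ * s₃ = -1) :
    s₁ * (a * b) + s₂ * (c * d) + s₃ * (e * f) ≤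
      1 + 2 * ((if a = c then (0:ℝ) else 1) + (if b = e then (0:ℝ) else 1) +
        (if d = f then (0:ℝ) else 1)) := by
  rcases hs₁ with rfl | rfl <;> rcases hs₂ with rfl | rfl <;> rcases hs₃ with rfl | rfl <;>
    rcases ha with rfl | rfl <;> rcases hb with rfl | rfl <;> rcases hc with rfl | rfl <;>
    rcases hd with rfl | rfl <;> rcases he with rfl | rfl <;> rcases hf with rfl | rfl <;>
    norm_num at hodd <;> norm_num

/-- For six jointly distributed ±1-valued random variables
`Q₁₂, Q₂₁, Q₁₃, Q₃₁, Q₂₃, Q₃₂`, every sign combination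
`±⟨Q₁₂Q₂₁⟩ ± ⟨Q₁₃Q₃₁⟩ ± ⟨Q₂₃Q₃₂⟩` with an odd number of minus signs
(i.e. `−x+y+z`, `x−y+z`, `x+y−z`, `−x−y−z`) is at most `1 + 2Δ'`, where
`Δ' = Pr[Q₁₂≠Q₁₃] + Pr[Q₂₁≠Q₂₃] + Pr[Q₃₁≠Q₃₂]`. -/
theorem lg_with_signaling {Ω : Type*} [MeasurableSpace Ω]
    (μ : Measure Ω) [IsProbabilityMeasure μ]
    (Q₁₂ Q₂₁ Q₁₃ Q₃₁ Q₂₃ Q₃₂ : Ω → ℝ)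
    (hm₁₂ : Measurable Q₁₂) (hm₂₁ : Measurable Q₂₁) (hm₁₃ : Measurable Q₁₃)
    (hm₃₁ : Measurable Q₃₁) (hm₂₃ : Measurable Q₂₃) (hm₃₂ : Measurable Q₃₂)
    (h₁₂ : ∀ ω, Q₁₂ ω = 1 ∨ Q₁₂ ω = -1) (h₂₁ : ∀ ω, Q₂₁ ω = 1 ∨ Q₂₁ ω = -1)
    (h₁₃ : ∀ ω, Q₁₃ ω = 1 ∨ Q₁₃ ω = -1) (h₃₁ : ∀ ω, Q₃₁ ω = 1 ∨ Q₃₁ ω = -1)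
    (h₂₃ : ∀ ω, Q₂₃ ω = 1 ∨ Q₂₃ ω = -1) (h₃₂ : ∀ ω, Q₃₂ ω = 1 ∨ Q₃₂ ω = -1) :
    (-(∫ ω, Q₁₂ ω * Q₂₁ ω ∂μ) + (∫ ω, Q₁₃ ω * Q₃₁ ω ∂μ) + (∫ ω, Q₂₃ ω * Q₃₂ ω ∂μ) ≤
      1 + 2 * ((μ {ω | Q₁₂ ω ≠ Q₁₃ ω}).toReal + (μ {ω | Q₂₁ ω ≠ Q₂₃ ω}).toReal +
        (μ {ω | Q₃₁ ω ≠ Q₃₂ ω}).toReal)) ∧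
    ((∫ ω, Q₁₂ ω * Q₂₁ ω ∂μ) - (∫ ω, Q₁₃ ω * Q₃₁ ω ∂μ) + (∫ ω, Q₂₃ ω * Q₃₂ ω ∂μ) ≤
      1 + 2 * ((μ {ω | Q₁₂ ω ≠ Q₁₃ ω}).toReal + (μ {ω | Q₂₁ ω ≠ Q₂₃ ω}).toReal +
        (μ {ω | Q₃₁ ω ≠ Q₃₂ ω}).toReal)) ∧
    ((∫ ω, Q₁₂ ω * Q₂₁ ω ∂μ) + (∫ ω, Q₁₃ ω * Q₃₁ ω ∂μ) - (∫ ω, Q₂₃ ω * Q₃₂ ω ∂μ) ≤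
      1 + 2 * ((μ {ω | Q₁₂ ω ≠ Q₁₃ ω}).toReal + (μ {ω | Q₂₁ ω ≠ Q₂₃ ω}).toReal +
        (μ {ω | Q₃₁ ω ≠ Q₃₂ ω}).toReal)) ∧
    (-(∫ ω, Q₁₂ ω * Q₂₁ ω ∂μ) - (∫ ω, Q₁₃ ω * Q₃₁ ω ∂μ) - (∫ ω, Q₂₃ ω * Q₃₂ ω ∂μ) ≤
      1 + 2 * ((μ {ω | Q₁₂ ω ≠ Q₁₃ ω}).toReal + (μ {ω | Q₂₁ ω ≠ Q₂₃ ω}).toReal +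
        (μ {ω | Q₃₁ ω ≠ Q₃₂ ω}).toReal)) := by
  -- measurable mismatch sets
  have hA₁ : MeasurableSet {ω | Q₁₂ ω ≠ Q₁₃ ω} := (measurableSet_eq_fun hm₁₂ hm₁₃).compl
  have hA₂ : MeasurableSet {ω | Q₂₁ ω ≠ Q₂₃ ω} := (measurableSet_eq_fun hm₂₁ hm₂₃).compl
  have hA₃ : MeasurableSet {ω | Q₃₁ ω ≠ Q₃₂ ω} := (measurableSet_eq_fun hm₃₁ hm₃₂).compl
  -- integrability of the products
  have hint : ∀ (F G : Ω → ℝ), Measurable F → Measurable G →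
      (∀ ω, F ω = 1 ∨ F ω = -1) → (∀ ω, G ω = 1 ∨ G ω = -1) →
      Integrable (fun ω => F ω * G ω) μ := by
    intro F G hF hG hFv hGv
    refine Integrable.mono' (integrable_const 1) ((hF.mul hG).aestronglyMeasurable) ?_
    filter_upwards with ω
    rcases hFv ω with h | h <;> rcases hGv ω with h' | h' <;> simp [h, h']
  have hI₁ := hint _ _ hm₁₂ hm₂₁ h₁₂ h₂₁
  have hI₂ := hint _ _ hm₁₃ hm₃₁ h₁₃ h₃₁
  have hI₃ := hint _ _ hm₂₃ hm₃₂ h₂₃ h₃₂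
  -- integrable indicator functions
  have hInd : ∀ (A : Set Ω), MeasurableSet A →
      Integrable (A.indicator (fun _ => (1:ℝ))) μ := fun A hA =>
    (integrable_const (1:ℝ)).indicator hA
  have hJ₁ := hInd _ hA₁
  have hJ₂ := hInd _ hA₂
  have hJ₃ := hInd _ hA₃
  have key : ∀ s₁ s₂ s₃ : ℝ, (s₁ = 1 ∨ s₁ = -1) → (s₂ = 1 ∨ s₂ = -1) →
      (s₃ = 1 ∨ s₃ = -1) → s₁ * s₂ * s₃ = -1 →
      s₁ * (∫ ω, Q₁₂ ω * Q₂₁ ω ∂μ) + s₂ * (∫ ω, Q₁₃ ω * Q₃₁ ω ∂μ) +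
        s₃ * (∫ ω, Q₂₃ ω * Q₃₂ ω ∂μ) ≤
      1 + 2 * ((μ {ω | Q₁₂ ω ≠ Q₁₃ ω}).toReal + (μ {ω | Q₂₁ ω ≠ Q₂₃ ω}).toReal +
        (μ {ω | Q₃₁ ω ≠ Q₃₂ ω}).toReal) := by
    intro s₁ s₂ s₃ hs₁ hs₂ hs₃ hodd
    have step1 : s₁ * (∫ ω, Q₁₂ ω * Q₂₁ ω ∂μ) + s₂ * (∫ ω, Q₁₃ ω * Q₃₁ ω ∂μ) +
        s₃ * (∫ ω, Q₂₃ ω * Q₃₂ ω ∂μ) =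
        ∫ ω, (s₁ * (Q₁₂ ω * Q₂₁ ω) + s₂ * (Q₁₃ ω * Q₃₁ ω) + s₃ * (Q₂₃ ω * Q₃₂ ω)) ∂μ := by
      rw [integral_add (f := fun ω => s₁ * (Q₁₂ ω * Q₂₁ ω) + s₂ * (Q₁₃ ω * Q₃₁ ω))
          (g := fun ω => s₃ * (Q₂₃ ω * Q₃₂ ω))
          ((hI₁.const_mul s₁).add (hI₂.const_mul s₂)) (hI₃.const_mul s₃),
        integral_add (f := fun ω => s₁ * (Q₁₂ ω * Q₂₁ ω))
          (g := fun ω => s₂ * (Q₁₃ ω * Q₃₁ ω)) (hI₁.const_mul s₁) (hI₂.const_mul s₂),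
        integral_const_mul _ _, integral_const_mul _ _, integral_const_mul _ _]
    have step3 : (∫ ω, (1 + 2 * (({ω | Q₁₂ ω ≠ Q₁₃ ω}.indicator (fun _ => (1:ℝ)) ω) +
          ({ω | Q₂₁ ω ≠ Q₂₃ ω}.indicator (fun _ => (1:ℝ)) ω) +
          ({ω | Q₃₁ ω ≠ Q₃₂ ω}.indicator (fun _ => (1:ℝ)) ω))) ∂μ) =
        1 + 2 * ((μ {ω | Q₁₂ ω ≠ Q₁₃ ω}).toReal + (μ {ω | Q₂₁ ω ≠ Q₂₃ ω}).toReal +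
          (μ {ω | Q₃₁ ω ≠ Q₃₂ ω}).toReal) := by
      rw [integral_add (f := fun _ => (1:ℝ))
          (g := fun ω => 2 * (({ω | Q₁₂ ω ≠ Q₁₃ ω}.indicator (fun _ => (1:ℝ)) ω) +
            ({ω | Q₂₁ ω ≠ Q₂₃ ω}.indicator (fun _ => (1:ℝ)) ω) +
            ({ω | Q₃₁ ω ≠ Q₃₂ ω}.indicator (fun _ => (1:ℝ)) ω)))
          (integrable_const 1) (((hJ₁.add hJ₂).add hJ₃).const_mul 2),
        integral_const_mul _ _,
        integral_add (f := fun ω => ({ω | Q₁₂ ω ≠ Q₁₃ ω}.indicator (fun _ => (1:ℝ)) ω) +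
            ({ω | Q₂₁ ω ≠ Q₂₃ ω}.indicator (fun _ => (1:ℝ)) ω))
          (g := fun ω => ({ω | Q₃₁ ω ≠ Q₃₂ ω}.indicator (fun _ => (1:ℝ)) ω))
          (hJ₁.add hJ₂) hJ₃,
        integral_add (f := fun ω => ({ω | Q₁₂ ω ≠ Q₁₃ ω}.indicator (fun _ => (1:ℝ)) ω))
          (g := fun ω => ({ω | Q₂₁ ω ≠ Q₂₃ ω}.indicator (fun _ => (1:ℝ)) ω)) hJ₁ hJ₂,
        integral_indicator_const _ hA₁, integral_indicator_const _ hA₂,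
        integral_indicator_const _ hA₃]
      simp [measure_univ, Measure.real]
    rw [step1, ← step3]
    refine integral_mono ((((hI₁.const_mul s₁).add (hI₂.const_mul s₂)).add
      (hI₃.const_mul s₃))) ((integrable_const 1).add
      (((hJ₁.add hJ₂).add hJ₃).const_mul 2)) ?_
    intro ω
    have e₁ : ({ω | Q₁₂ ω ≠ Q₁₃ ω}.indicator (fun _ => (1:ℝ)) ω) =
        if Q₁₂ ω = Q₁₃ ω then (0:ℝ) else 1 := by
      by_cases h : Q₁₂ ω = Q₁₃ ω <;> simp [Set.indicator_apply, h]
    have e₂ : ({ω | Q₂₁ ω ≠ Q₂₃ ω}.indicator (fun _ => (1:ℝ)) ω) =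
        if Q₂₁ ω = Q₂₃ ω then (0:ℝ) else 1 := by
      by_cases h : Q₂₁ ω = Q₂₃ ω <;> simp [Set.indicator_apply, h]
    have e₃ : ({ω | Q₃₁ ω ≠ Q₃₂ ω}.indicator (fun _ => (1:ℝ)) ω) =
        if Q₃₁ ω = Q₃₂ ω then (0:ℝ) else 1 := by
      by_cases h : Q₃₁ ω = Q₃₂ ω <;> simp [Set.indicator_apply, h]
    simp only [Pi.add_apply, Pi.one_apply]
    rw [e₁, e₂, e₃]
    exact ptwise_lg s₁ s₂ s₃ _ _ _ _ _ _ hs₁ hs₂ hs₃ (h₁₂ ω) (h₂₁ ω) (h₁₃ ω)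
      (h₃₁ ω) (h₂₃ ω) (h₃₂ ω) hodd
  refine ⟨?_, ?_, ?_, ?_⟩
  · have := key (-1) 1 1 (Or.inr rfl) (Or.inl rfl) (Or.inl rfl) (by norm_num)
    linarith
  · have := key 1 (-1) 1 (Or.inl rfl) (Or.inr rfl) (Or.inl rfl) (by norm_num)
    linarith
  · have := key 1 1 (-1) (Or.inl rfl) (Or.inl rfl) (Or.inr rfl) (by norm_num)
    linarith
  · have := key (-1) (-1) (-1) (Or.inr rfl) (Or.inr rfl) (Or.inr rfl) (by norm_num)
    linarith
end

section
/- For any four jointly distributed ±1-valued random variables A₁, A₂, B₁, B₂ on a single probability space, and for each (i,j) ∈ {1,2}², |⟨A₁B₁⟩ + ⟨A₁B₂⟩ + ⟨A₂B₁⟩ + ⟨A₂B₂⟩ − 2⟨A_iB_j⟩| ≤ 2 (the CHSH inequality). -/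
open MeasureTheory

lemma chsh_integrable {Ω : Type*} [MeasurableSpace Ω] (μ : Measure Ω) [IsProbabilityMeasure μ]
    (f g : Ω → ℝ) (hf : Measurable f) (hg : Measurable g)
    (h1 : ∀ ω, f ω = 1 ∨ f ω = -1) (h2 : ∀ ω, g ω = 1 ∨ g ω = -1) :
    Integrable (fun ω => f ω * g ω) μ := by
  apply (integrable_const (1 : ℝ)).mono' ((hf.mul hg).aestronglyMeasurable)
  filter_upwards with ω
  rcases h1 ω with h | h <;> rcases h2 ω with h' | h' <;> simp [h, h']

lemma chsh_pt (a0 a1 b0 b1 c : ℝ) (ha0 : a0 = 1 ∨ a0 = -1) (ha1 : a1 = 1 ∨ a1 = -1)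
    (hb0 : b0 = 1 ∨ b0 = -1) (hb1 : b1 = 1 ∨ b1 = -1)
    (hc : c = a0 * b0 ∨ c = a0 * b1 ∨ c = a1 * b0 ∨ c = a1 * b1) :
    |a0 * b0 + a0 * b1 + a1 * b0 + a1 * b1 - 2 * c| ≤ 2 := by
  rcases hc with h | h | h | h <;> subst h <;>
    rcases ha0 with h | h <;> subst h <;>
    rcases ha1 with h | h <;> subst h <;>
    rcases hb0 with h | h <;> subst h <;>
    rcases hb1 with h | h <;> subst h <;> norm_num

/-- CHSH/Fine: For jointly distributed ±1-valued random variables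
`A 0, A 1, B 0, B 1`, for each `(i, j)`,
`|⟨A₁B₁⟩ + ⟨A₁B₂⟩ + ⟨A₂B₁⟩ + ⟨A₂B₂⟩ − 2⟨A_i B_j⟩| ≤ 2`. -/
theorem chsh_joint {Ω : Type*} [MeasurableSpace Ω] (μ : Measure Ω) [IsProbabilityMeasure μ]
    (A B : Fin 2 → Ω → ℝ)
    (hmA : ∀ i, Measurable (A i)) (hmB : ∀ j, Measurable (B j))
    (hA : ∀ i ω, A i ω = 1 ∨ A i ω = -1) (hB : ∀ j ω, B j ω = 1 ∨ B j ω = -1) :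
    ∀ i j : Fin 2,
      |(∫ ω, A 0 ω * B 0 ω ∂μ) + (∫ ω, A 0 ω * B 1 ω ∂μ) +
        (∫ ω, A 1 ω * B 0 ω ∂μ) + (∫ ω, A 1 ω * B 1 ω ∂μ) -
        2 * ∫ ω, A i ω * B j ω ∂μ| ≤ 2 := by
  intro i j
  have hint : ∀ i j : Fin 2, Integrable (fun ω => A i ω * B j ω) μ :=
    fun i j => chsh_integrable μ _ _ (hmA i) (hmB j) (hA i) (hB j)
  have key : (∫ ω, (A 0 ω * B 0 ω + A 0 ω * B 1 ω + A 1 ω * B 0 ω + A 1 ω * B 1 ω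
        - 2 * (A i ω * B j ω)) ∂μ) =
      (∫ ω, A 0 ω * B 0 ω ∂μ) + (∫ ω, A 0 ω * B 1 ω ∂μ) +
        (∫ ω, A 1 ω * B 0 ω ∂μ) + (∫ ω, A 1 ω * B 1 ω ∂μ) -
        2 * ∫ ω, A i ω * B j ω ∂μ := by
    have h2' : Integrable (fun ω => A 0 ω * B 0 ω + A 0 ω * B 1 ω) μ :=
      (hint 0 0).add (hint 0 1)
    have h3' : Integrable (fun ω => A 0 ω * B 0 ω + A 0 ω * B 1 ω + A 1 ω * B 0 ω) μ :=
      h2'.add (hint 1 0)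
    have h4' : Integrable (fun ω => A 0 ω * B 0 ω + A 0 ω * B 1 ω + A 1 ω * B 0 ω
        + A 1 ω * B 1 ω) μ := h3'.add (hint 1 1)
    rw [integral_sub h4' ((hint i j).const_mul 2), integral_add h3' (hint 1 1),
      integral_add h2' (hint 1 0), integral_add (hint 0 0) (hint 0 1), integral_const_mul]
  rw [← key]
  have hpt : ∀ ω, |A 0 ω * B 0 ω + A 0 ω * B 1 ω + A 1 ω * B 0 ω + A 1 ω * B 1 ω
      - 2 * (A i ω * B j ω)| ≤ 2 := by
    intro ω
    refine chsh_pt _ _ _ _ _ (hA 0 ω) (hA 1 ω) (hB 0 ω) (hB 1 ω) ?_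
    fin_cases i <;> fin_cases j
    · exact Or.inl rfl
    · exact Or.inr (Or.inl rfl)
    · exact Or.inr (Or.inr (Or.inl rfl))
    · exact Or.inr (Or.inr (Or.inr rfl))
  calc |∫ ω, (A 0 ω * B 0 ω + A 0 ω * B 1 ω + A 1 ω * B 0 ω + A 1 ω * B 1 ω
        - 2 * (A i ω * B j ω)) ∂μ|
      = ‖∫ ω, (A 0 ω * B 0 ω + A 0 ω * B 1 ω + A 1 ω * B 0 ω + A 1 ω * B 1 ω
        - 2 * (A i ω * B j ω)) ∂μ‖ := (Real.norm_eq_abs _).symm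
    _ ≤ ∫ ω, ‖A 0 ω * B 0 ω + A 0 ω * B 1 ω + A 1 ω * B 0 ω + A 1 ω * B 1 ω
        - 2 * (A i ω * B j ω)‖ ∂μ := norm_integral_le_integral_norm _
    _ ≤ ∫ _ω, (2:ℝ) ∂μ := by
        apply integral_mono_of_nonneg (Filter.Eventually.of_forall fun ω => norm_nonneg _)
          (integrable_const 2)
          (Filter.Eventually.of_forall fun ω => by simpa [Real.norm_eq_abs] using hpt ω)
    _ = 2 := by simp
end

section
/- Consider a Bell-system with observed pairwise distributions of (A_ij, B_ij) for i,j ∈ {1,2}, where all variables are ±1-valued. If there exists a joint distribution of all eight variables consistent with the four observed pair distributions, then for each (i,j), |⟨A₁₁B₁₁⟩ + ⟨A₁₂B₁₂⟩ + ⟨A₂₁B₂₁⟩ + ⟨A₂₂B₂₂⟩ − 2⟨A_ijB_ij⟩| ≤ 2 + 2Δ_min, where Δ_min is the value of Δ = Pr[A₁₁≠A₁₂] + Pr[A₂₁≠A₂₂] + Pr[B₁₁≠B₂₁] + Pr[B₁₂≠B₂₂] achieved by that joint distribution. In particular, Δ_min ≥ (1/2)·max_{i,j}|⟨A₁₁B₁₁⟩+⟨A₁₂B₁₂⟩+⟨A₂₁B₂₁⟩+⟨A₂₂B₂₂⟩−2⟨A_ijB_ij⟩|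 − 1. -/
open MeasureTheory

section helpers
variable {Ω : Type*} [MeasurableSpace Ω]

private lemma pm_abs {x : ℝ} (h : x = 1 ∨ x = -1) : |x| ≤ 1 := by
  rcases h with rfl | rfl <;> norm_num

private lemma int_mul (μ : Measure Ω) [IsProbabilityMeasure μ]
    {f g : Ω → ℝ} (hf : Measurable f) (hg : Measurable g)
    (hbf : ∀ ω, |f ω| ≤ 1) (hbg : ∀ ω, |g ω| ≤ 1) :
    Integrable (fun ω => f ω * g ω) μ := by
  refine (integrable_const (1:ℝ)).mono' ((hf.mul hg).aestronglyMeasurable) ?_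
  filter_upwards with ω
  rw [norm_mul, Real.norm_eq_abs, Real.norm_eq_abs]
  nlinarith [hbf ω, hbg ω, abs_nonneg (f ω), abs_nonneg (g ω)]

private lemma meas_ne_sym (μ : Measure Ω) (f g : Ω → ℝ) :
    (μ {ω | f ω ≠ g ω}).toReal = (μ {ω | g ω ≠ f ω}).toReal := by
  have e : {ω | f ω ≠ g ω} = {ω | g ω ≠ f ω} := by ext ω; exact ne_comm
  rw [e]

private lemma meas_ne_self (μ : Measure Ω) (f : Ω → ℝ) :
    (μ {ω | f ω ≠ f ω}).toReal = 0 := by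
  simp

private lemma diff_bound (μ : Measure Ω) [IsProbabilityMeasure μ]
    {f g h k : Ω → ℝ} (hf : Measurable f) (hg : Measurable g)
    (hh : Measurable h) (hk : Measurable k)
    (hbf : ∀ ω, |f ω| ≤ 1) (hbg : ∀ ω, |g ω| ≤ 1)
    (hbh : ∀ ω, |h ω| ≤ 1) (hbk : ∀ ω, |k ω| ≤ 1) :
    |(∫ ω, f ω * h ω ∂μ) - ∫ ω, g ω * k ω ∂μ| ≤
      2 * (μ {ω | f ω ≠ g ω}).toReal + 2 * (μ {ω | h ω ≠ k ω}).toReal := by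
  have hs : MeasurableSet {ω | f ω ≠ g ω} := (measurableSet_eq_fun hf hg).compl
  have ht : MeasurableSet {ω | h ω ≠ k ω} := (measurableSet_eq_fun hh hk).compl
  have hpt : ∀ ω, |f ω * h ω - g ω * k ω| ≤
      Set.indicator {ω | f ω ≠ g ω} (fun _ => (2:ℝ)) ω +
      Set.indicator {ω | h ω ≠ k ω} (fun _ => (2:ℝ)) ω := by
    intro ω
    have h1 : |f ω - g ω| ≤ Set.indicator {ω | f ω ≠ g ω} (fun _ => (2:ℝ)) ω := by
      by_cases hfg : f ω = g ω
      · have hm : ω ∉ {ω | f ω ≠ g ω} := by simp [hfg]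
        rw [Set.indicator_of_notMem hm, hfg]; simp
      · rw [Set.indicator_of_mem (show ω ∈ {ω | f ω ≠ g ω} from hfg)]
        have := abs_sub (f ω) (g ω)
        linarith [hbf ω, hbg ω]
    have h2 : |h ω - k ω| ≤ Set.indicator {ω | h ω ≠ k ω} (fun _ => (2:ℝ)) ω := by
      by_cases hhk : h ω = k ω
      · have hm : ω ∉ {ω | h ω ≠ k ω} := by simp [hhk]
        rw [Set.indicator_of_notMem hm, hhk]; simp
      · rw [Set.indicator_of_mem (show ω ∈ {ω | h ω ≠ k ω} from hhk)]
        have := abs_sub (h ω) (k ω)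
        linarith [hbh ω, hbk ω]
    have key : |f ω * h ω - g ω * k ω| ≤ |f ω - g ω| + |h ω - k ω| := by
      have e : f ω * h ω - g ω * k ω = (f ω - g ω) * h ω + g ω * (h ω - k ω) := by ring
      rw [e]
      calc |(f ω - g ω) * h ω + g ω * (h ω - k ω)|
          ≤ |(f ω - g ω) * h ω| + |g ω * (h ω - k ω)| := abs_add_le _ _
        _ = |f ω - g ω| * |h ω| + |g ω| * |h ω - k ω| := by rw [abs_mul, abs_mul]
        _ ≤ |f ω - g ω| + |h ω - k ω| := by
            nlinarith [hbh ω, hbg ω, abs_nonneg (f ω - g ω), abs_nonneg (h ω - k ω),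
              abs_nonneg (g ω), abs_nonneg (h ω)]
    linarith
  have I1 := int_mul μ hf hh hbf hbh
  have I2 := int_mul μ hg hk hbg hbk
  have Iind : Integrable (fun ω => Set.indicator {ω | f ω ≠ g ω} (fun _ => (2:ℝ)) ω +
      Set.indicator {ω | h ω ≠ k ω} (fun _ => (2:ℝ)) ω) μ :=
    ((integrable_const _).indicator hs).add ((integrable_const _).indicator ht)
  calc |(∫ ω, f ω * h ω ∂μ) - ∫ ω, g ω * k ω ∂μ|
      = |∫ ω, (f ω * h ω - g ω * k ω) ∂μ| := by rw [integral_sub I1 I2]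
    _ ≤ ∫ ω, |f ω * h ω - g ω * k ω| ∂μ := by
        simpa [Real.norm_eq_abs] using
          norm_integral_le_integral_norm (μ := μ) (fun ω => f ω * h ω - g ω * k ω)
    _ ≤ ∫ ω, (Set.indicator {ω | f ω ≠ g ω} (fun _ => (2:ℝ)) ω +
          Set.indicator {ω | h ω ≠ k ω} (fun _ => (2:ℝ)) ω) ∂μ :=
        integral_mono (I1.sub I2).abs Iind hpt
    _ = 2 * (μ {ω | f ω ≠ g ω}).toReal + 2 * (μ {ω | h ω ≠ k ω}).toReal := by
        rw [integral_add ((integrable_const _).indicator hs) ((integrable_const _).indicator ht),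
          integral_indicator_const _ hs, integral_indicator_const _ ht]
        simp [mul_comm]; rfl

end helpers


section helpers2
variable {Ω : Type*} [MeasurableSpace Ω]

private lemma pm_abs' {x : ℝ} (h : x = 1 ∨ x = -1) : |x| ≤ 1 := by
  rcases h with rfl | rfl <;> norm_num

private lemma chsh_pt_s10 (a a' b b' x : ℝ)
    (ha : a = 1 ∨ a = -1) (ha' : a' = 1 ∨ a' = -1)
    (hb : b = 1 ∨ b = -1) (hb' : b' = 1 ∨ b' = -1)
    (hx : x = a * b ∨ x = a * b' ∨ x = a' * b ∨ x = a' * b') :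
    |a * b + a * b' + a' * b + a' * b' - 2 * x| ≤ 2 := by
  rcases ha with rfl | rfl <;> rcases ha' with rfl | rfl <;>
    rcases hb with rfl | rfl <;> rcases hb' with rfl | rfl <;>
    rcases hx with rfl | rfl | rfl | rfl <;> norm_num [abs_le]

private lemma int_mul' (μ : Measure Ω) [IsProbabilityMeasure μ]
    {f g : Ω → ℝ} (hf : Measurable f) (hg : Measurable g)
    (hbf : ∀ ω, |f ω| ≤ 1) (hbg : ∀ ω, |g ω| ≤ 1) :
    Integrable (fun ω => f ω * g ω) μ := by
  refine (integrable_const (1:ℝ)).mono' ((hf.mul hg).aestronglyMeasurable) ?_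
  filter_upwards with ω
  rw [norm_mul, Real.norm_eq_abs, Real.norm_eq_abs]
  nlinarith [hbf ω, hbg ω, abs_nonneg (f ω), abs_nonneg (g ω)]

private lemma chsh_int (μ : Measure Ω) [IsProbabilityMeasure μ]
    (a a' b b' x : Ω → ℝ)
    (hma : Measurable a) (hma' : Measurable a') (hmb : Measurable b)
    (hmb' : Measurable b') (hmx : Measurable x)
    (ha : ∀ ω, a ω = 1 ∨ a ω = -1) (ha' : ∀ ω, a' ω = 1 ∨ a' ω = -1)
    (hb : ∀ ω, b ω = 1 ∨ b ω = -1) (hb' : ∀ ω, b' ω = 1 ∨ b' ω = -1)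
    (hx : ∀ ω, x ω = a ω * b ω ∨ x ω = a ω * b' ω ∨ x ω = a' ω * b ω ∨ x ω = a' ω * b' ω) :
    |(∫ ω, a ω * b ω ∂μ) + (∫ ω, a ω * b' ω ∂μ) + (∫ ω, a' ω * b ω ∂μ) +
      (∫ ω, a' ω * b' ω ∂μ) - 2 * ∫ ω, x ω ∂μ| ≤ 2 := by
  have hbx : ∀ ω, |x ω| ≤ 1 := by
    intro ω
    rcases hx ω with h | h | h | h <;> rw [h, abs_mul] <;>
      nlinarith [pm_abs' (ha ω), pm_abs' (ha' ω), pm_abs' (hb ω), pm_abs' (hb' ω),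
        abs_nonneg (a ω), abs_nonneg (a' ω), abs_nonneg (b ω), abs_nonneg (b' ω)]
  have hIx : Integrable x μ := by
    refine (integrable_const (1:ℝ)).mono' hmx.aestronglyMeasurable ?_
    filter_upwards with ω
    simpa [Real.norm_eq_abs] using hbx ω
  have Iab := int_mul' μ hma hmb (fun ω => pm_abs' (ha ω)) (fun ω => pm_abs' (hb ω))
  have Iab' := int_mul' μ hma hmb' (fun ω => pm_abs' (ha ω)) (fun ω => pm_abs' (hb' ω))
  have Ia'b := int_mul' μ hma' hmb (fun ω => pm_abs' (ha' ω)) (fun ω => pm_abs' (hb ω))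
  have Ia'b' := int_mul' μ hma' hmb' (fun ω => pm_abs' (ha' ω)) (fun ω => pm_abs' (hb' ω))
  have key : (∫ ω, a ω * b ω ∂μ) + (∫ ω, a ω * b' ω ∂μ) + (∫ ω, a' ω * b ω ∂μ) +
      (∫ ω, a' ω * b' ω ∂μ) - 2 * ∫ ω, x ω ∂μ =
      ∫ ω, (a ω * b ω + a ω * b' ω + a' ω * b ω + a' ω * b' ω - 2 * x ω) ∂μ := by
    have I2 : Integrable (fun ω => a ω * b ω + a ω * b' ω) μ := Iab.add Iab'
    have I3 : Integrable (fun ω => a ω * b ω + a ω * b' ω + a' ω * b ω) μ := I2.add Ia'b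
    have I4 : Integrable (fun ω => a ω * b ω + a ω * b' ω + a' ω * b ω + a' ω * b' ω) μ :=
      I3.add Ia'b'
    have I5 : Integrable (fun ω => 2 * x ω) μ := hIx.const_mul 2
    rw [integral_sub I4 I5, integral_add I3 Ia'b', integral_add I2 Ia'b,
      integral_add Iab Iab', MeasureTheory.integral_const_mul]
  rw [key]
  calc |∫ ω, (a ω * b ω + a ω * b' ω + a' ω * b ω + a' ω * b' ω - 2 * x ω) ∂μ|
      = ‖∫ ω, (a ω * b ω + a ω * b' ω + a' ω * b ω + a' ω * b' ω - 2 * x ω) ∂μ‖ :=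
        (Real.norm_eq_abs _).symm
    _ ≤ 2 * (μ Set.univ).toReal := by
        refine norm_integral_le_of_norm_le_const ?_
        filter_upwards with ω
        rw [Real.norm_eq_abs]
        exact chsh_pt_s10 _ _ _ _ _ (ha ω) (ha' ω) (hb ω) (hb' ω) (hx ω)
    _ = 2 := by simp

end helpers2


section main
variable {Ω : Type*} [MeasurableSpace Ω]

private lemma bell_case (μ : Measure Ω) [IsProbabilityMeasure μ]
    (A B : Fin 2 → Fin 2 → Ω → ℝ)
    (hmA : ∀ i j, Measurable (A i j)) (hmB : ∀ i j, Measurable (B i j))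
    (hA : ∀ i j ω, A i j ω = 1 ∨ A i j ω = -1)
    (hB : ∀ i j ω, B i j ω = 1 ∨ B i j ω = -1)
    (i j : Fin 2) :
    |(∫ ω, A 0 0 ω * B 0 0 ω ∂μ) + (∫ ω, A 0 1 ω * B 0 1 ω ∂μ) +
      (∫ ω, A 1 0 ω * B 1 0 ω ∂μ) + (∫ ω, A 1 1 ω * B 1 1 ω ∂μ) -
      2 * ∫ ω, A i j ω * B i j ω ∂μ| ≤
    2 + 2 * ((μ {ω | A 0 0 ω ≠ A 0 1 ω}).toReal + (μ {ω | A 1 0 ω ≠ A 1 1 ω}).toReal +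
      (μ {ω | B 0 0 ω ≠ B 1 0 ω}).toReal + (μ {ω | B 0 1 ω ≠ B 1 1 ω}).toReal) := by
  have hbA : ∀ k l ω, |A k l ω| ≤ 1 := fun k l ω => pm_abs (hA k l ω)
  have hbB : ∀ k l ω, |B k l ω| ≤ 1 := fun k l ω => pm_abs (hB k l ω)
  fin_cases i <;> fin_cases j <;>
    simp only [Fin.isValue, Fin.zero_eta, Fin.mk_one]
  · -- case (0,0)
    have hT := chsh_int μ (A 0 0) (A 1 0) (B 0 0) (B 0 1)
      (fun ω => A 0 0 ω * B 0 0 ω)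
      (hmA 0 0) (hmA 1 0) (hmB 0 0) (hmB 0 1) ((hmA 0 0).mul (hmB 0 0))
      (hA 0 0) (hA 1 0) (hB 0 0) (hB 0 1) (fun ω => Or.inl rfl)
    try simp only [] at hT
    have E01 := diff_bound μ (hmA 0 1) (hmA 0 0) (hmB 0 1) (hmB 0 1)
      (hbA 0 1) (hbA 0 0) (hbB 0 1) (hbB 0 1)
    have E10 := diff_bound μ (hmA 1 0) (hmA 1 0) (hmB 1 0) (hmB 0 0)
      (hbA 1 0) (hbA 1 0) (hbB 1 0) (hbB 0 0)
    have E11 := diff_bound μ (hmA 1 1) (hmA 1 0) (hmB 1 1) (hmB 0 1)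
      (hbA 1 1) (hbA 1 0) (hbB 1 1) (hbB 0 1)
    have sA01 := meas_ne_sym μ (A 0 1) (A 0 0)
    have zB01 := meas_ne_self μ (B 0 1)
    have zA10 := meas_ne_self μ (A 1 0)
    have sB10 := meas_ne_sym μ (B 1 0) (B 0 0)
    have sA11 := meas_ne_sym μ (A 1 1) (A 1 0)
    have sB11 := meas_ne_sym μ (B 1 1) (B 0 1)
    rw [abs_le]
    constructor <;> linarith [(abs_le.mp hT).1, (abs_le.mp hT).2, (abs_le.mp E01).1, (abs_le.mp E01).2, (abs_le.mp E10).1, (abs_le.mp E10).2, (abs_le.mp E11).1, (abs_le.mp E11).2, sA01, zB01, zA10, sB10, sA11, sB11]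
  · -- case (0,1)
    have hT := chsh_int μ (A 0 1) (A 1 1) (B 0 0) (B 0 1)
      (fun ω => A 0 1 ω * B 0 1 ω)
      (hmA 0 1) (hmA 1 1) (hmB 0 0) (hmB 0 1) ((hmA 0 1).mul (hmB 0 1))
      (hA 0 1) (hA 1 1) (hB 0 0) (hB 0 1) (fun ω => Or.inr (Or.inl rfl))
    try simp only [] at hT
    have E00 := diff_bound μ (hmA 0 0) (hmA 0 1) (hmB 0 0) (hmB 0 0)
      (hbA 0 0) (hbA 0 1) (hbB 0 0) (hbB 0 0)
    have E10 := diff_bound μ (hmA 1 0) (hmA 1 1) (hmB 1 0) (hmB 0 0)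
      (hbA 1 0) (hbA 1 1) (hbB 1 0) (hbB 0 0)
    have E11 := diff_bound μ (hmA 1 1) (hmA 1 1) (hmB 1 1) (hmB 0 1)
      (hbA 1 1) (hbA 1 1) (hbB 1 1) (hbB 0 1)
    have zB00 := meas_ne_self μ (B 0 0)
    have sB10 := meas_ne_sym μ (B 1 0) (B 0 0)
    have zA11 := meas_ne_self μ (A 1 1)
    have sB11 := meas_ne_sym μ (B 1 1) (B 0 1)
    rw [abs_le]
    constructor <;> linarith [(abs_le.mp hT).1, (abs_le.mp hT).2, (abs_le.mp E00).1, (abs_le.mp E00).2, (abs_le.mp E10).1, (abs_le.mp E10).2, (abs_le.mp E11).1, (abs_le.mp E11).2, zB00, sB10, zA11, sB11]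
  · -- case (1,0)
    have hT := chsh_int μ (A 0 0) (A 1 0) (B 1 0) (B 1 1)
      (fun ω => A 1 0 ω * B 1 0 ω)
      (hmA 0 0) (hmA 1 0) (hmB 1 0) (hmB 1 1) ((hmA 1 0).mul (hmB 1 0))
      (hA 0 0) (hA 1 0) (hB 1 0) (hB 1 1) (fun ω => Or.inr (Or.inr (Or.inl rfl)))
    try simp only [] at hT
    have E00 := diff_bound μ (hmA 0 0) (hmA 0 0) (hmB 0 0) (hmB 1 0)
      (hbA 0 0) (hbA 0 0) (hbB 0 0) (hbB 1 0)
    have E01 := diff_bound μ (hmA 0 1) (hmA 0 0) (hmB 0 1) (hmB 1 1)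
      (hbA 0 1) (hbA 0 0) (hbB 0 1) (hbB 1 1)
    have E11 := diff_bound μ (hmA 1 1) (hmA 1 0) (hmB 1 1) (hmB 1 1)
      (hbA 1 1) (hbA 1 0) (hbB 1 1) (hbB 1 1)
    have zA00 := meas_ne_self μ (A 0 0)
    have sA01 := meas_ne_sym μ (A 0 1) (A 0 0)
    have sA11 := meas_ne_sym μ (A 1 1) (A 1 0)
    have zB11 := meas_ne_self μ (B 1 1)
    rw [abs_le]
    constructor <;> linarith [(abs_le.mp hT).1, (abs_le.mp hT).2, (abs_le.mp E00).1, (abs_le.mp E00).2, (abs_le.mp E01).1, (abs_le.mp E01).2, (abs_le.mp E11).1, (abs_le.mp E11).2, zA00, sA01, sA11, zB11]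
  · -- case (1,1)
    have hT := chsh_int μ (A 0 1) (A 1 1) (B 1 0) (B 1 1)
      (fun ω => A 1 1 ω * B 1 1 ω)
      (hmA 0 1) (hmA 1 1) (hmB 1 0) (hmB 1 1) ((hmA 1 1).mul (hmB 1 1))
      (hA 0 1) (hA 1 1) (hB 1 0) (hB 1 1) (fun ω => Or.inr (Or.inr (Or.inr rfl)))
    try simp only [] at hT
    have E00 := diff_bound μ (hmA 0 0) (hmA 0 1) (hmB 0 0) (hmB 1 0)
      (hbA 0 0) (hbA 0 1) (hbB 0 0) (hbB 1 0)
    have E01 := diff_bound μ (hmA 0 1) (hmA 0 1) (hmB 0 1) (hmB 1 1)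
      (hbA 0 1) (hbA 0 1) (hbB 0 1) (hbB 1 1)
    have E10 := diff_bound μ (hmA 1 0) (hmA 1 1) (hmB 1 0) (hmB 1 0)
      (hbA 1 0) (hbA 1 1) (hbB 1 0) (hbB 1 0)
    have zA01 := meas_ne_self μ (A 0 1)
    have zB10 := meas_ne_self μ (B 1 0)
    rw [abs_le]
    constructor <;> linarith [(abs_le.mp hT).1, (abs_le.mp hT).2, (abs_le.mp E00).1, (abs_le.mp E00).2, (abs_le.mp E01).1, (abs_le.mp E01).2, (abs_le.mp E10).1, (abs_le.mp E10).2, zA01, zB10]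

end main

/-- If a joint distribution of all eight ±1-valued variables of a
Bell-system exists (here: the eight variables `A i j`, `B i j` on one probability
space; its pair marginals are the observed pair distributions), then for each
`(i,j)` the CHSH expression is at most `2 + 2Δ`, where
`Δ = Pr[A₁₁≠A₁₂] + Pr[A₂₁≠A₂₂] + Pr[B₁₁≠B₂₁] + Pr[B₁₂≠B₂₂]` is the value achieved
by that joint distribution; in particular
`Δ ≥ (1/2)·max_{i,j} |⟨A₁₁B₁₁⟩+⟨A₁₂B₁₂⟩+⟨A₂₁B₂₁⟩+⟨A₂₂B₂₂⟩−2⟨A_ijB_ij⟩| − 1`. -/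
theorem bell_joint_delta_bound {Ω : Type*} [MeasurableSpace Ω]
    (μ : Measure Ω) [IsProbabilityMeasure μ]
    (A B : Fin 2 → Fin 2 → Ω → ℝ)
    (hmA : ∀ i j, Measurable (A i j)) (hmB : ∀ i j, Measurable (B i j))
    (hA : ∀ i j ω, A i j ω = 1 ∨ A i j ω = -1)
    (hB : ∀ i j ω, B i j ω = 1 ∨ B i j ω = -1) :
    (∀ i j : Fin 2,
      |(∫ ω, A 0 0 ω * B 0 0 ω ∂μ) + (∫ ω, A 0 1 ω * B 0 1 ω ∂μ) +
        (∫ ω, A 1 0 ω * B 1 0 ω ∂μ) + (∫ ω, A 1 1 ω * B 1 1 ω ∂μ) -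
        2 * ∫ ω, A i j ω * B i j ω ∂μ| ≤
      2 + 2 * ((μ {ω | A 0 0 ω ≠ A 0 1 ω}).toReal + (μ {ω | A 1 0 ω ≠ A 1 1 ω}).toReal +
        (μ {ω | B 0 0 ω ≠ B 1 0 ω}).toReal + (μ {ω | B 0 1 ω ≠ B 1 1 ω}).toReal)) ∧
    (1 / 2) * (max (max
        |(∫ ω, A 0 0 ω * B 0 0 ω ∂μ) + (∫ ω, A 0 1 ω * B 0 1 ω ∂μ) +
          (∫ ω, A 1 0 ω * B 1 0 ω ∂μ) + (∫ ω, A 1 1 ω * B 1 1 ω ∂μ) -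
          2 * ∫ ω, A 0 0 ω * B 0 0 ω ∂μ|
        |(∫ ω, A 0 0 ω * B 0 0 ω ∂μ) + (∫ ω, A 0 1 ω * B 0 1 ω ∂μ) +
          (∫ ω, A 1 0 ω * B 1 0 ω ∂μ) + (∫ ω, A 1 1 ω * B 1 1 ω ∂μ) -
          2 * ∫ ω, A 0 1 ω * B 0 1 ω ∂μ|) (max
        |(∫ ω, A 0 0 ω * B 0 0 ω ∂μ) + (∫ ω, A 0 1 ω * B 0 1 ω ∂μ) +
          (∫ ω, A 1 0 ω * B 1 0 ω ∂μ) + (∫ ω, A 1 1 ω * B 1 1 ω ∂μ) -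
          2 * ∫ ω, A 1 0 ω * B 1 0 ω ∂μ|
        |(∫ ω, A 0 0 ω * B 0 0 ω ∂μ) + (∫ ω, A 0 1 ω * B 0 1 ω ∂μ) +
          (∫ ω, A 1 0 ω * B 1 0 ω ∂μ) + (∫ ω, A 1 1 ω * B 1 1 ω ∂μ) -
          2 * ∫ ω, A 1 1 ω * B 1 1 ω ∂μ|)) - 1 ≤
      (μ {ω | A 0 0 ω ≠ A 0 1 ω}).toReal + (μ {ω | A 1 0 ω ≠ A 1 1 ω}).toReal +
        (μ {ω | B 0 0 ω ≠ B 1 0 ω}).toReal + (μ {ω | B 0 1 ω ≠ B 1 1 ω}).toReal := by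
  constructor
  · intro i j
    exact bell_case μ A B hmA hmB hA hB i j
  · have h00 := bell_case μ A B hmA hmB hA hB 0 0
    have h01 := bell_case μ A B hmA hmB hA hB 0 1
    have h10 := bell_case μ A B hmA hmB hA hB 1 0
    have h11 := bell_case μ A B hmA hmB hA hB 1 1
    have hm := max_le (max_le h00 h01) (max_le h10 h11)
    linarith
end

section
/- Consider an LG-system with observed joint distributions of (Q₁₂,Q₂₁), (Q₁₃,Q₃₁), (Q₂₃,Q₃₂), all ±1-valued. If a joint distribution on all six variables exists consistent with the three observed pairs, then Δ' = Pr[Q₁₂≠Q₁₃] + Pr[Q₂₁≠Q₂₃] + Pr[Q₃₁≠Q₃₂] under that joint distribution satisfies Δ' ≥ −1/2 + (1/2)·s₁(⟨Q₁₂Q₂₁⟩, ⟨Q₁₃Q₃₁⟩, ⟨Q₂₃Q₃₂⟩), where s₁(x,y,z) is the maximum of ±x±y±z over sign patterns with an odd number of minus signs. -/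
open MeasureTheory

/-- Six ±1 reals whose product is −1 sum to at most 4. -/
lemma six_sum_bound (t₁ t₂ t₃ t₄ t₅ t₆ : ℝ)
    (h₁ : t₁ = 1 ∨ t₁ = -1) (h₂ : t₂ = 1 ∨ t₂ = -1) (h₃ : t₃ = 1 ∨ t₃ = -1)
    (h₄ : t₄ = 1 ∨ t₄ = -1) (h₅ : t₅ = 1 ∨ t₅ = -1) (h₆ : t₆ = 1 ∨ t₆ = -1)
    (hp : t₁ * t₂ * t₃ * t₄ * t₅ * t₆ = -1) :
    t₁ + t₂ + t₃ + t₄ + t₅ + t₆ ≤ 4 := by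
  rcases h₁ with h₁|h₁ <;> rcases h₂ with h₂|h₂ <;> rcases h₃ with h₃|h₃ <;>
    rcases h₄ with h₄|h₄ <;> rcases h₅ with h₅|h₅ <;> rcases h₆ with h₆|h₆ <;>
    subst h₁ <;> subst h₂ <;> subst h₃ <;> subst h₄ <;> subst h₅ <;> subst h₆ <;>
    revert hp <;> norm_num

lemma int_prod {Ω : Type*} [MeasurableSpace Ω] (μ : Measure Ω) [IsProbabilityMeasure μ]
    {Q Q' : Ω → ℝ} (mQ : Measurable Q) (mQ' : Measurable Q')
    (hQ : ∀ ω, Q ω = 1 ∨ Q ω = -1) (hQ' : ∀ ω, Q' ω = 1 ∨ Q' ω = -1) :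
    Integrable (fun ω => Q ω * Q' ω) μ := by
  apply Integrable.mono' (integrable_const (1 : ℝ)) ((mQ.mul mQ').aestronglyMeasurable)
  filter_upwards with ω
  rcases hQ ω with h|h <;> rcases hQ' ω with h'|h' <;> simp [h, h']

lemma prob_ne {Ω : Type*} [MeasurableSpace Ω] (μ : Measure Ω) [IsProbabilityMeasure μ]
    {Q Q' : Ω → ℝ} (mQ : Measurable Q) (mQ' : Measurable Q')
    (hQ : ∀ ω, Q ω = 1 ∨ Q ω = -1) (hQ' : ∀ ω, Q' ω = 1 ∨ Q' ω = -1) :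
    (μ {ω | Q ω ≠ Q' ω}).toReal = (1 - ∫ ω, Q ω * Q' ω ∂μ) / 2 := by
  have hS : MeasurableSet {ω | Q ω ≠ Q' ω} := (measurableSet_eq_fun mQ mQ').compl
  have hind : ∀ ω, ({ω | Q ω ≠ Q' ω}).indicator (fun _ => (1:ℝ)) ω
      = (1 - Q ω * Q' ω) / 2 := by
    intro ω
    by_cases h : Q ω = Q' ω
    · rw [Set.indicator_of_notMem (by simpa using h)]
      rcases hQ' ω with h'|h' <;> rw [h, h'] <;> norm_num
    · rw [Set.indicator_of_mem (by simpa using h)]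
      rcases hQ ω with h1|h1 <;> rcases hQ' ω with h2|h2 <;>
        rw [h1, h2] <;> simp [h1, h2] at h ⊢
  have key : (μ {ω | Q ω ≠ Q' ω}).toReal = ∫ ω, (1 - Q ω * Q' ω) / 2 ∂μ := by
    rw [← measureReal_def, ← integral_indicator_one hS]
    exact integral_congr_ae (Filter.Eventually.of_forall hind)
  rw [key]
  have hI := int_prod μ mQ mQ' hQ hQ'
  rw [integral_div, integral_sub (integrable_const 1) hI, integral_const]
  simp

/-- If a joint distribution on all six ±1-valued variables of an
LG-system exists (here: the six variables on one probability space; its pair marginals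
are the observed pairs), then
`Δ' = Pr[Q₁₂≠Q₁₃] + Pr[Q₂₁≠Q₂₃] + Pr[Q₃₁≠Q₃₂]` satisfies
`Δ' ≥ −1/2 + (1/2)·s₁(⟨Q₁₂Q₂₁⟩, ⟨Q₁₃Q₃₁⟩, ⟨Q₂₃Q₃₂⟩)` where
`s₁(x,y,z) = max{−x+y+z, x−y+z, x+y−z, −x−y−z}`. -/
theorem lg_joint_delta_bound {Ω : Type*} [MeasurableSpace Ω]
    (μ : Measure Ω) [IsProbabilityMeasure μ]
    (Q₁₂ Q₂₁ Q₁₃ Q₃₁ Q₂₃ Q₃₂ : Ω → ℝ)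
    (hm₁₂ : Measurable Q₁₂) (hm₂₁ : Measurable Q₂₁) (hm₁₃ : Measurable Q₁₃)
    (hm₃₁ : Measurable Q₃₁) (hm₂₃ : Measurable Q₂₃) (hm₃₂ : Measurable Q₃₂)
    (h₁₂ : ∀ ω, Q₁₂ ω = 1 ∨ Q₁₂ ω = -1) (h₂₁ : ∀ ω, Q₂₁ ω = 1 ∨ Q₂₁ ω = -1)
    (h₁₃ : ∀ ω, Q₁₃ ω = 1 ∨ Q₁₃ ω = -1) (h₃₁ : ∀ ω, Q₃₁ ω = 1 ∨ Q₃₁ ω = -1)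
    (h₂₃ : ∀ ω, Q₂₃ ω = 1 ∨ Q₂₃ ω = -1) (h₃₂ : ∀ ω, Q₃₂ ω = 1 ∨ Q₃₂ ω = -1) :
    -(1 / 2) + (1 / 2) * (max (max
        (-(∫ ω, Q₁₂ ω * Q₂₁ ω ∂μ) + (∫ ω, Q₁₃ ω * Q₃₁ ω ∂μ) + ∫ ω, Q₂₃ ω * Q₃₂ ω ∂μ)
        ((∫ ω, Q₁₂ ω * Q₂₁ ω ∂μ) - (∫ ω, Q₁₃ ω * Q₃₁ ω ∂μ) + ∫ ω, Q₂₃ ω * Q₃₂ ω ∂μ)) (max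
        ((∫ ω, Q₁₂ ω * Q₂₁ ω ∂μ) + (∫ ω, Q₁₃ ω * Q₃₁ ω ∂μ) - ∫ ω, Q₂₃ ω * Q₃₂ ω ∂μ)
        (-(∫ ω, Q₁₂ ω * Q₂₁ ω ∂μ) - (∫ ω, Q₁₃ ω * Q₃₁ ω ∂μ) - ∫ ω, Q₂₃ ω * Q₃₂ ω ∂μ))) ≤
      (μ {ω | Q₁₂ ω ≠ Q₁₃ ω}).toReal + (μ {ω | Q₂₁ ω ≠ Q₂₃ ω}).toReal +
        (μ {ω | Q₃₁ ω ≠ Q₃₂ ω}).toReal := by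
  have I1 := int_prod μ hm₁₂ hm₂₁ h₁₂ h₂₁
  have I2 := int_prod μ hm₁₃ hm₃₁ h₁₃ h₃₁
  have I3 := int_prod μ hm₂₃ hm₃₂ h₂₃ h₃₂
  have I4 := int_prod μ hm₁₂ hm₁₃ h₁₂ h₁₃
  have I5 := int_prod μ hm₂₁ hm₂₃ h₂₁ h₂₃
  have I6 := int_prod μ hm₃₁ hm₃₂ h₃₁ h₃₂
  rw [prob_ne μ hm₁₂ hm₁₃ h₁₂ h₁₃, prob_ne μ hm₂₁ hm₂₃ h₂₁ h₂₃,
    prob_ne μ hm₃₁ hm₃₂ h₃₁ h₃₂]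
  set a := ∫ ω, Q₁₂ ω * Q₂₁ ω ∂μ with ha
  set b := ∫ ω, Q₁₃ ω * Q₃₁ ω ∂μ with hb
  set c := ∫ ω, Q₂₃ ω * Q₃₂ ω ∂μ with hc
  set p := ∫ ω, Q₁₂ ω * Q₁₃ ω ∂μ with hp
  set q := ∫ ω, Q₂₁ ω * Q₂₃ ω ∂μ with hq
  set r := ∫ ω, Q₃₁ ω * Q₃₂ ω ∂μ with hr
  have key : ∀ e₁ e₂ e₃ : ℝ, (e₁ = 1 ∨ e₁ = -1) → (e₂ = 1 ∨ e₂ = -1) →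
      (e₃ = 1 ∨ e₃ = -1) → e₁ * e₂ * e₃ = -1 →
      e₁ * a + e₂ * b + e₃ * c + p + q + r ≤ 4 := by
    intro e₁ e₂ e₃ he₁ he₂ he₃ hprod
    have hsum : e₁ * a + e₂ * b + e₃ * c + p + q + r
        = ∫ ω, (e₁ * (Q₁₂ ω * Q₂₁ ω) + e₂ * (Q₁₃ ω * Q₃₁ ω) + e₃ * (Q₂₃ ω * Q₃₂ ω)
            + Q₁₂ ω * Q₁₃ ω + Q₂₁ ω * Q₂₃ ω + Q₃₁ ω * Q₃₂ ω) ∂μ := by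
      have E6 : ∫ ω, ((e₁ * (Q₁₂ ω * Q₂₁ ω) + e₂ * (Q₁₃ ω * Q₃₁ ω)
            + e₃ * (Q₂₃ ω * Q₃₂ ω) + Q₁₂ ω * Q₁₃ ω + Q₂₁ ω * Q₂₃ ω)
            + Q₃₁ ω * Q₃₂ ω) ∂μ
          = (∫ ω, (e₁ * (Q₁₂ ω * Q₂₁ ω) + e₂ * (Q₁₃ ω * Q₃₁ ω)
            + e₃ * (Q₂₃ ω * Q₃₂ ω) + Q₁₂ ω * Q₁₃ ω + Q₂₁ ω * Q₂₃ ω) ∂μ) + r :=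
        integral_add (((((I1.const_mul e₁).add (I2.const_mul e₂)).add
          (I3.const_mul e₃)).add I4).add I5) I6
      have E5 : ∫ ω, ((e₁ * (Q₁₂ ω * Q₂₁ ω) + e₂ * (Q₁₃ ω * Q₃₁ ω)
            + e₃ * (Q₂₃ ω * Q₃₂ ω) + Q₁₂ ω * Q₁₃ ω) + Q₂₁ ω * Q₂₃ ω) ∂μ
          = (∫ ω, (e₁ * (Q₁₂ ω * Q₂₁ ω) + e₂ * (Q₁₃ ω * Q₃₁ ω)
            + e₃ * (Q₂₃ ω * Q₃₂ ω) + Q₁₂ ω * Q₁₃ ω) ∂μ) + q :=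
        integral_add ((((I1.const_mul e₁).add (I2.const_mul e₂)).add
          (I3.const_mul e₃)).add I4) I5
      have E4 : ∫ ω, ((e₁ * (Q₁₂ ω * Q₂₁ ω) + e₂ * (Q₁₃ ω * Q₃₁ ω)
            + e₃ * (Q₂₃ ω * Q₃₂ ω)) + Q₁₂ ω * Q₁₃ ω) ∂μ
          = (∫ ω, (e₁ * (Q₁₂ ω * Q₂₁ ω) + e₂ * (Q₁₃ ω * Q₃₁ ω)
            + e₃ * (Q₂₃ ω * Q₃₂ ω)) ∂μ) + p :=
        integral_add (((I1.const_mul e₁).add (I2.const_mul e₂)).add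
          (I3.const_mul e₃)) I4
      have E3 : ∫ ω, ((e₁ * (Q₁₂ ω * Q₂₁ ω) + e₂ * (Q₁₃ ω * Q₃₁ ω))
            + e₃ * (Q₂₃ ω * Q₃₂ ω)) ∂μ
          = (∫ ω, (e₁ * (Q₁₂ ω * Q₂₁ ω) + e₂ * (Q₁₃ ω * Q₃₁ ω)) ∂μ)
            + ∫ ω, e₃ * (Q₂₃ ω * Q₃₂ ω) ∂μ :=
        integral_add ((I1.const_mul e₁).add (I2.const_mul e₂)) (I3.const_mul e₃)
      have E2 : ∫ ω, (e₁ * (Q₁₂ ω * Q₂₁ ω) + e₂ * (Q₁₃ ω * Q₃₁ ω)) ∂μ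
          = (∫ ω, e₁ * (Q₁₂ ω * Q₂₁ ω) ∂μ) + ∫ ω, e₂ * (Q₁₃ ω * Q₃₁ ω) ∂μ :=
        integral_add (I1.const_mul e₁) (I2.const_mul e₂)
      have C1 : ∫ ω, e₁ * (Q₁₂ ω * Q₂₁ ω) ∂μ = e₁ * a := integral_const_mul e₁ _
      have C2 : ∫ ω, e₂ * (Q₁₃ ω * Q₃₁ ω) ∂μ = e₂ * b := integral_const_mul e₂ _
      have C3 : ∫ ω, e₃ * (Q₂₃ ω * Q₃₂ ω) ∂μ = e₃ * c := integral_const_mul e₃ _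
      rw [E6, E5, E4, E3, E2, C1, C2, C3]
    rw [hsum]
    have hpt : ∀ ω, (e₁ * (Q₁₂ ω * Q₂₁ ω) + e₂ * (Q₁₃ ω * Q₃₁ ω) + e₃ * (Q₂₃ ω * Q₃₂ ω)
        + Q₁₂ ω * Q₁₃ ω + Q₂₁ ω * Q₂₃ ω + Q₃₁ ω * Q₃₂ ω) ≤ 4 := by
      intro ω
      have pm : ∀ x y : ℝ, (x = 1 ∨ x = -1) → (y = 1 ∨ y = -1) →
          x * y = 1 ∨ x * y = -1 := by
        intro x y hx hy
        rcases hx with hx|hx <;> rcases hy with hy|hy <;> rw [hx, hy] <;> norm_num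
      apply six_sum_bound _ _ _ _ _ _
        (pm _ _ he₁ (pm _ _ (h₁₂ ω) (h₂₁ ω)))
        (pm _ _ he₂ (pm _ _ (h₁₃ ω) (h₃₁ ω)))
        (pm _ _ he₃ (pm _ _ (h₂₃ ω) (h₃₂ ω)))
        (pm _ _ (h₁₂ ω) (h₁₃ ω)) (pm _ _ (h₂₁ ω) (h₂₃ ω)) (pm _ _ (h₃₁ ω) (h₃₂ ω))
      have s1 : Q₁₂ ω * Q₁₂ ω = 1 := by rcases h₁₂ ω with h|h <;> rw [h] <;> norm_num
      have s2 : Q₂₁ ω * Q₂₁ ω = 1 := by rcases h₂₁ ω with h|h <;> rw [h] <;> norm_num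
      have s3 : Q₁₃ ω * Q₁₃ ω = 1 := by rcases h₁₃ ω with h|h <;> rw [h] <;> norm_num
      have s4 : Q₃₁ ω * Q₃₁ ω = 1 := by rcases h₃₁ ω with h|h <;> rw [h] <;> norm_num
      have s5 : Q₂₃ ω * Q₂₃ ω = 1 := by rcases h₂₃ ω with h|h <;> rw [h] <;> norm_num
      have s6 : Q₃₂ ω * Q₃₂ ω = 1 := by rcases h₃₂ ω with h|h <;> rw [h] <;> norm_num
      calc e₁ * (Q₁₂ ω * Q₂₁ ω) * (e₂ * (Q₁₃ ω * Q₃₁ ω)) * (e₃ * (Q₂₃ ω * Q₃₂ ω))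
            * (Q₁₂ ω * Q₁₃ ω) * (Q₂₁ ω * Q₂₃ ω) * (Q₃₁ ω * Q₃₂ ω)
          = (e₁ * e₂ * e₃) * ((Q₁₂ ω * Q₁₂ ω) * (Q₂₁ ω * Q₂₁ ω) * (Q₁₃ ω * Q₁₃ ω)
            * (Q₃₁ ω * Q₃₁ ω) * (Q₂₃ ω * Q₂₃ ω) * (Q₃₂ ω * Q₃₂ ω)) := by ring
        _ = -1 := by rw [s1, s2, s3, s4, s5, s6, hprod]; ring
    have hInt : Integrable (fun ω => e₁ * (Q₁₂ ω * Q₂₁ ω) + e₂ * (Q₁₃ ω * Q₃₁ ω)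
        + e₃ * (Q₂₃ ω * Q₃₂ ω) + Q₁₂ ω * Q₁₃ ω + Q₂₁ ω * Q₂₃ ω + Q₃₁ ω * Q₃₂ ω) μ :=
      (((((I1.const_mul e₁).add (I2.const_mul e₂)).add (I3.const_mul e₃)).add I4).add
        I5).add I6
    calc ∫ ω, (e₁ * (Q₁₂ ω * Q₂₁ ω) + e₂ * (Q₁₃ ω * Q₃₁ ω) + e₃ * (Q₂₃ ω * Q₃₂ ω)
            + Q₁₂ ω * Q₁₃ ω + Q₂₁ ω * Q₂₃ ω + Q₃₁ ω * Q₃₂ ω) ∂μ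
        ≤ ∫ _, (4 : ℝ) ∂μ := integral_mono hInt (integrable_const 4) hpt
      _ = 4 := by simp
  have k1 := key (-1) 1 1 (Or.inr rfl) (Or.inl rfl) (Or.inl rfl) (by norm_num)
  have k2 := key 1 (-1) 1 (Or.inl rfl) (Or.inr rfl) (Or.inl rfl) (by norm_num)
  have k3 := key 1 1 (-1) (Or.inl rfl) (Or.inl rfl) (Or.inr rfl) (by norm_num)
  have k4 := key (-1) (-1) (-1) (Or.inr rfl) (Or.inr rfl) (Or.inr rfl) (by norm_num)
  have hmax : max (max (-a + b + c) (a - b + c)) (max (a + b - c) (-a - b - c))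
      ≤ 4 - p - q - r := by
    apply max_le <;> apply max_le <;> linarith
  linarith [hmax, le_max_left (max (-a + b + c) (a - b + c)) (max (a + b - c) (-a - b - c))]
end

section
/- If all eight ±1-valued random variables A_ij, B_ij (i,j ∈ {1,2}) of a Bell-system are jointly distributed and satisfy Pr[A₁₁≠A₁₂] = Pr[A₂₁≠A₂₂] = Pr[B₁₁≠B₂₁] = Pr[B₁₂≠B₂₂] = 0, then the no-signaling conditions ⟨A_i1⟩ = ⟨A_i2⟩ and ⟨B_1j⟩ = ⟨B_2j⟩ hold for i,j ∈ {1,2}, and the CHSH inequality max_{i,j}|⟨A₁₁B₁₁⟩+⟨A₁₂B₁₂⟩+⟨A₂₁B₂₁⟩+⟨A₂₂B₂₂⟩−2⟨A_ijB_ij⟩| ≤ 2 holds. -/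
open MeasureTheory

/-- If all eight ±1-valued random variables `A i j`, `B i j` of a
Bell-system are jointly distributed and
`Pr[A₁₁≠A₁₂] = Pr[A₂₁≠A₂₂] = Pr[B₁₁≠B₂₁] = Pr[B₁₂≠B₂₂] = 0`, then no-signaling holds
(`⟨A_i1⟩ = ⟨A_i2⟩`, `⟨B_1j⟩ = ⟨B_2j⟩`) and the CHSH inequality
`max_{i,j}|⟨A₁₁B₁₁⟩+⟨A₁₂B₁₂⟩+⟨A₂₁B₂₁⟩+⟨A₂₂B₂₂⟩−2⟨A_ijB_ij⟩| ≤ 2` holds. -/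
theorem zero_connections_imply_nosignaling_chsh {Ω : Type*} [MeasurableSpace Ω]
    (μ : Measure Ω) [IsProbabilityMeasure μ]
    (A B : Fin 2 → Fin 2 → Ω → ℝ)
    (hmA : ∀ i j, Measurable (A i j)) (hmB : ∀ i j, Measurable (B i j))
    (hA : ∀ i j ω, A i j ω = 1 ∨ A i j ω = -1)
    (hB : ∀ i j ω, B i j ω = 1 ∨ B i j ω = -1)
    (hA0 : ∀ i : Fin 2, μ {ω | A i 0 ω ≠ A i 1 ω} = 0)
    (hB0 : ∀ j : Fin 2, μ {ω | B 0 j ω ≠ B 1 j ω} = 0) :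
    (∀ i : Fin 2, (∫ ω, A i 0 ω ∂μ) = ∫ ω, A i 1 ω ∂μ) ∧
    (∀ j : Fin 2, (∫ ω, B 0 j ω ∂μ) = ∫ ω, B 1 j ω ∂μ) ∧
    (∀ i j : Fin 2,
      |(∫ ω, A 0 0 ω * B 0 0 ω ∂μ) + (∫ ω, A 0 1 ω * B 0 1 ω ∂μ) +
        (∫ ω, A 1 0 ω * B 1 0 ω ∂μ) + (∫ ω, A 1 1 ω * B 1 1 ω ∂μ) -
        2 * ∫ ω, A i j ω * B i j ω ∂μ| ≤ 2) := by
  have hAe : ∀ i : Fin 2, A i 0 =ᵐ[μ] A i 1 := fun i => ae_iff.mpr (hA0 i)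
  have hBe : ∀ j : Fin 2, B 0 j =ᵐ[μ] B 1 j := fun j => ae_iff.mpr (hB0 j)
  have hint : ∀ k l : Fin 2, Integrable (fun ω => A k l ω * B k l ω) μ := by
    intro k l
    refine (integrable_const (1:ℝ)).mono' ((hmA k l).mul (hmB k l)).aestronglyMeasurable
      (ae_of_all _ fun ω => ?_)
    rcases hA k l ω with h1 | h1 <;> rcases hB k l ω with h2 | h2 <;> simp [h1, h2]
  refine ⟨fun i => integral_congr_ae (hAe i), fun j => integral_congr_ae (hBe j), fun i j => ?_⟩
  have h12 : Integrable (fun ω => A 0 0 ω * B 0 0 ω + A 0 1 ω * B 0 1 ω) μ := by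
    exact (hint 0 0).add (hint 0 1)
  have h123 : Integrable (fun ω => A 0 0 ω * B 0 0 ω + A 0 1 ω * B 0 1 ω
      + A 1 0 ω * B 1 0 ω) μ := by exact h12.add (hint 1 0)
  have h1234 : Integrable (fun ω => A 0 0 ω * B 0 0 ω + A 0 1 ω * B 0 1 ω
      + A 1 0 ω * B 1 0 ω + A 1 1 ω * B 1 1 ω) μ := by exact h123.add (hint 1 1)
  have hc : Integrable (fun ω => 2 * (A i j ω * B i j ω)) μ := by
    exact (hint i j).const_mul 2
  have key : (∫ ω, A 0 0 ω * B 0 0 ω ∂μ) + (∫ ω, A 0 1 ω * B 0 1 ω ∂μ) +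
        (∫ ω, A 1 0 ω * B 1 0 ω ∂μ) + (∫ ω, A 1 1 ω * B 1 1 ω ∂μ) -
        2 * ∫ ω, A i j ω * B i j ω ∂μ =
      ∫ ω, (A 0 0 ω * B 0 0 ω + A 0 1 ω * B 0 1 ω + A 1 0 ω * B 1 0 ω +
        A 1 1 ω * B 1 1 ω - 2 * (A i j ω * B i j ω)) ∂μ := by
    rw [integral_sub h1234 hc, integral_add h123 (hint 1 1), integral_add h12 (hint 1 0),
      integral_add (hint 0 0) (hint 0 1), integral_const_mul]
  rw [key, ← Real.norm_eq_abs]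
  have hb : ∀ᵐ ω ∂μ, ‖A 0 0 ω * B 0 0 ω + A 0 1 ω * B 0 1 ω + A 1 0 ω * B 1 0 ω +
      A 1 1 ω * B 1 1 ω - 2 * (A i j ω * B i j ω)‖ ≤ 2 := by
    filter_upwards [hAe 0, hAe 1, hBe 0, hBe 1] with ω h1 h2 h3 h4
    have hAij : A i j ω = A i 0 ω := by
      fin_cases j
      · rfl
      · fin_cases i
        · exact h1.symm
        · exact h2.symm
    have hBij : B i j ω = B 0 j ω := by
      fin_cases i
      · rfl
      · fin_cases j
        · exact h3.symm
        · exact h4.symm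
    have hAi : A i 0 ω = A 0 0 ω ∨ A i 0 ω = A 1 0 ω := by
      fin_cases i
      exacts [Or.inl rfl, Or.inr rfl]
    have hBj : B 0 j ω = B 0 0 ω ∨ B 0 j ω = B 0 1 ω := by
      fin_cases j
      exacts [Or.inl rfl, Or.inr rfl]
    rw [Real.norm_eq_abs, abs_le, hAij, hBij, ← h1, ← h2, ← h3, ← h4]
    rcases hAi with hx | hx <;> rcases hBj with hy | hy <;> rw [hx, hy] <;>
      rcases hA 0 0 ω with e1 | e1 <;> rcases hA 1 0 ω with e2 | e2 <;>
      rcases hB 0 0 ω with e3 | e3 <;> rcases hB 0 1 ω with e4 | e4 <;>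
      rw [e1, e2, e3, e4] <;> norm_num
  calc ‖∫ ω, (A 0 0 ω * B 0 0 ω + A 0 1 ω * B 0 1 ω + A 1 0 ω * B 1 0 ω +
        A 1 1 ω * B 1 1 ω - 2 * (A i j ω * B i j ω)) ∂μ‖ ≤ 2 * (μ Set.univ).toReal :=
      norm_integral_le_of_norm_le_const hb
    _ = 2 := by simp
end

section
/- If six jointly distributed ±1-valued random variables Q₁₂,Q₁₃,Q₂₁,Q₂₃,Q₃₁,Q₃₂ satisfy Pr[Q₁₂≠Q₁₃] = Pr[Q₂₁≠Q₂₃] = Pr[Q₃₁≠Q₃₂] = 0, then the LGSZ inequalities hold: −1 ≤ ⟨Q₁₂Q₂₁⟩ + ⟨Q₁₃Q₃₁⟩ + ⟨Q₂₃Q₃₂⟩ ≤ 1 + 2·min{⟨Q₁₂Q₂₁⟩, ⟨Q₁₃Q₃₁⟩, ⟨Q₂₃Q₃₂⟩}. -/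
open MeasureTheory

lemma pm_int {Ω : Type*} [MeasurableSpace Ω] (μ : Measure Ω) [IsProbabilityMeasure μ]
    (f g : Ω → ℝ) (hf : Measurable f) (hg : Measurable g)
    (hfp : ∀ ω, f ω = 1 ∨ f ω = -1) (hgp : ∀ ω, g ω = 1 ∨ g ω = -1) :
    Integrable (fun ω => f ω * g ω) μ := by
  apply Integrable.mono' (integrable_const (1 : ℝ)) ((hf.mul hg).aestronglyMeasurable)
  filter_upwards with ω
  rcases hfp ω with h | h <;> rcases hgp ω with h' | h' <;> simp [h, h', abs_le]

/-- If six jointly distributed ±1-valued random variables satisfy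
`Pr[Q₁₂≠Q₁₃] = Pr[Q₂₁≠Q₂₃] = Pr[Q₃₁≠Q₃₂] = 0`, then the LGSZ inequalities hold:
`−1 ≤ ⟨Q₁₂Q₂₁⟩ + ⟨Q₁₃Q₃₁⟩ + ⟨Q₂₃Q₃₂⟩ ≤ 1 + 2·min{⟨Q₁₂Q₂₁⟩, ⟨Q₁₃Q₃₁⟩, ⟨Q₂₃Q₃₂⟩}`. -/
theorem zero_connections_imply_lgsz {Ω : Type*} [MeasurableSpace Ω]
    (μ : Measure Ω) [IsProbabilityMeasure μ]
    (Q₁₂ Q₁₃ Q₂₁ Q₂₃ Q₃₁ Q₃₂ : Ω → ℝ)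
    (hm₁₂ : Measurable Q₁₂) (hm₁₃ : Measurable Q₁₃) (hm₂₁ : Measurable Q₂₁)
    (hm₂₃ : Measurable Q₂₃) (hm₃₁ : Measurable Q₃₁) (hm₃₂ : Measurable Q₃₂)
    (h₁₂ : ∀ ω, Q₁₂ ω = 1 ∨ Q₁₂ ω = -1) (h₁₃ : ∀ ω, Q₁₃ ω = 1 ∨ Q₁₃ ω = -1)
    (h₂₁ : ∀ ω, Q₂₁ ω = 1 ∨ Q₂₁ ω = -1) (h₂₃ : ∀ ω, Q₂₃ ω = 1 ∨ Q₂₃ ω = -1)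
    (h₃₁ : ∀ ω, Q₃₁ ω = 1 ∨ Q₃₁ ω = -1) (h₃₂ : ∀ ω, Q₃₂ ω = 1 ∨ Q₃₂ ω = -1)
    (hc₁ : μ {ω | Q₁₂ ω ≠ Q₁₃ ω} = 0) (hc₂ : μ {ω | Q₂₁ ω ≠ Q₂₃ ω} = 0)
    (hc₃ : μ {ω | Q₃₁ ω ≠ Q₃₂ ω} = 0) :
    -1 ≤ (∫ ω, Q₁₂ ω * Q₂₁ ω ∂μ) + (∫ ω, Q₁₃ ω * Q₃₁ ω ∂μ) + (∫ ω, Q₂₃ ω * Q₃₂ ω ∂μ) ∧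
      (∫ ω, Q₁₂ ω * Q₂₁ ω ∂μ) + (∫ ω, Q₁₃ ω * Q₃₁ ω ∂μ) + (∫ ω, Q₂₃ ω * Q₃₂ ω ∂μ) ≤
        1 + 2 * min (min (∫ ω, Q₁₂ ω * Q₂₁ ω ∂μ) (∫ ω, Q₁₃ ω * Q₃₁ ω ∂μ))
          (∫ ω, Q₂₃ ω * Q₃₂ ω ∂μ) := by
  -- a.e. equalities
  have ae₁ : Q₁₃ =ᵐ[μ] Q₁₂ := by
    rw [Filter.EventuallyEq, ae_iff]
    convert hc₁ using 2 with ω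
    simp [eq_comm, ne_comm]
  have ae₂ : Q₂₃ =ᵐ[μ] Q₂₁ := by
    rw [Filter.EventuallyEq, ae_iff]
    convert hc₂ using 2 with ω
    simp [eq_comm, ne_comm]
  have ae₃ : Q₃₂ =ᵐ[μ] Q₃₁ := by
    rw [Filter.EventuallyEq, ae_iff]
    convert hc₃ using 2 with ω
    simp [eq_comm, ne_comm]
  have e2 : (∫ ω, Q₁₃ ω * Q₃₁ ω ∂μ) = ∫ ω, Q₁₂ ω * Q₃₁ ω ∂μ := by
    apply integral_congr_ae
    filter_upwards [ae₁] with ω h; rw [h]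
  have e3 : (∫ ω, Q₂₃ ω * Q₃₂ ω ∂μ) = ∫ ω, Q₂₁ ω * Q₃₁ ω ∂μ := by
    apply integral_congr_ae
    filter_upwards [ae₂, ae₃] with ω h h'; rw [h, h']
  rw [e2, e3]
  set X := Q₁₂; set Y := Q₂₁; set Z := Q₃₁
  have iXY := pm_int μ X Y hm₁₂ hm₂₁ h₁₂ h₂₁
  have iXZ := pm_int μ X Z hm₁₂ hm₃₁ h₁₂ h₃₁
  have iYZ := pm_int μ Y Z hm₂₁ hm₃₁ h₂₁ h₃₁
  have hsum : (∫ ω, X ω * Y ω ∂μ) + (∫ ω, X ω * Z ω ∂μ) + (∫ ω, Y ω * Z ω ∂μ)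
      = ∫ ω, X ω * Y ω + X ω * Z ω + Y ω * Z ω ∂μ := by
    have h1 := integral_add iXY iXZ
    have h2 := integral_add (iXY.add iXZ) iYZ
    simp only [Pi.add_apply] at h1 h2
    rw [h2, h1]
  have key : ∀ ω, -1 ≤ X ω * Y ω + X ω * Z ω + Y ω * Z ω ∧
      X ω * Y ω + X ω * Z ω + Y ω * Z ω ≤ 1 + 2 * (X ω * Y ω) ∧
      X ω * Y ω + X ω * Z ω + Y ω * Z ω ≤ 1 + 2 * (X ω * Z ω) ∧
      X ω * Y ω + X ω * Z ω + Y ω * Z ω ≤ 1 + 2 * (Y ω * Z ω) := by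
    intro ω
    rcases h₁₂ ω with h | h <;> rcases h₂₁ ω with h' | h' <;> rcases h₃₁ ω with h'' | h'' <;>
      rw [h, h', h''] <;> norm_num
  have iconst : Integrable (fun _ : Ω => (1 : ℝ)) μ := integrable_const 1
  have intconst : (∫ _ : Ω, (1 : ℝ) ∂μ) = 1 := by simp
  constructor
  · rw [hsum]
    have : (∫ _ : Ω, (-1 : ℝ) ∂μ) ≤ ∫ ω, X ω * Y ω + X ω * Z ω + Y ω * Z ω ∂μ := by
      apply integral_mono (integrable_const _) ((iXY.add iXZ).add iYZ)
      intro ω; exact (key ω).1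
    simpa using this
  · rw [hsum]
    have b1 : (∫ ω, X ω * Y ω + X ω * Z ω + Y ω * Z ω ∂μ) ≤ ∫ ω, 1 + 2 * (X ω * Y ω) ∂μ := by
      apply integral_mono ((iXY.add iXZ).add iYZ) (iconst.add (iXY.const_mul 2))
      intro ω; exact (key ω).2.1
    have b2 : (∫ ω, X ω * Y ω + X ω * Z ω + Y ω * Z ω ∂μ) ≤ ∫ ω, 1 + 2 * (X ω * Z ω) ∂μ := by
      apply integral_mono ((iXY.add iXZ).add iYZ) (iconst.add (iXZ.const_mul 2))
      intro ω; exact (key ω).2.2.1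
    have b3 : (∫ ω, X ω * Y ω + X ω * Z ω + Y ω * Z ω ∂μ) ≤ ∫ ω, 1 + 2 * (Y ω * Z ω) ∂μ := by
      apply integral_mono ((iXY.add iXZ).add iYZ) (iconst.add (iYZ.const_mul 2))
      intro ω; exact (key ω).2.2.2
    rw [integral_add iconst (iXY.const_mul 2), integral_const_mul, intconst] at b1
    rw [integral_add iconst (iXZ.const_mul 2), integral_const_mul, intconst] at b2
    rw [integral_add iconst (iYZ.const_mul 2), integral_const_mul, intconst] at b3
    rcases min_cases (min (∫ ω, X ω * Y ω ∂μ) (∫ ω, X ω * Z ω ∂μ)) (∫ ω, Y ω * Z ω ∂μ) with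
      ⟨hmin, _⟩ | ⟨hmin, _⟩
    · rw [hmin]
      rcases min_cases (∫ ω, X ω * Y ω ∂μ) (∫ ω, X ω * Z ω ∂μ) with ⟨hm, _⟩ | ⟨hm, _⟩ <;>
        rw [hm] <;> [exact b1; exact b2]
    · rw [hmin]; exact b3
end
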